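/- Let k ≥ 2 be odd, let G_k be a 3-regular bipartite graph on 2k vertices with bipartition into independent sets A and B of size k, let H_k be as constructed, and let σ ∈ Res(G_k, H_k). Then for every vertex x of the mismatch graph G_k^σ − H_k: (1) if x ∉ {1, 2k−2}, then x is adjacent to exactly one other vertex of the same parity, that edge is negative, and x has degree 2, 4 or 6; (2) if x ∈ {1, 2k−2}, then x has degree 0, 2, 4 or 6 and all its neighbours in G_k^σ − H_k have parity opposite to that of x. -/

import Mathlib

/-!
For odd `k` every vertex `x` of `H_k` has exactly three neighbours: its two neighbours on the
cycle, of the opposite parity, and its chord partner, which has the parity of `x` unless `x` lies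
on the closing chord `{2k - 2, 1}`. Since `σ ∈ Res(G_k, H_k)`, the graph `G_k^σ` is 3-regular and
each of its edges joins vertices of opposite parity. So a same-parity edge of the mismatch graph at
`x` is an `H_k`-edge missing from `G_k^σ`, i.e. the chord at `x` taken as a negative edge. Both
graphs being 3-regular, `x` carries as many positive as negative mismatch edges, so its degree is
twice its negative degree: an even number at most `6`, and nonzero off the closing chord, where
the same-parity chord at `x` cannot be an edge of `G_k^σ`.
-/

open SimpleGraph

section MismatchDefs

variable {V W : Type*}

/-- The mismatch graph `G^π − H`: the symmetric difference of the image of `G` under the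
bijection `π` with `H`, as a graph on `V(H)`. Its edges are the positive edges
(edges of `G^π` not in `H`) together with the negative edges (edges of `H` not in `G^π`). -/
def mismatchGraph (G : SimpleGraph V) (H : SimpleGraph W) (π : V ≃ W) : SimpleGraph W :=
  symmDiff (G.map π.toEmbedding) H

/-- The degree of a vertex in the mismatch graph `G^π − H`. -/
noncomputable def mismatchDeg (G : SimpleGraph V) (H : SimpleGraph W) (π : V ≃ W) (x : W) : ℕ :=
  ((mismatchGraph G H π).neighborSet x).ncard

/-- The number of positive edges of `G^π − H` incident to `x`. -/
noncomputable def posDeg (G : SimpleGraph V) (H : SimpleGraph W) (π : V ≃ W) (x : W) : ℕ :=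
  ((G.map π.toEmbedding).neighborSet x \ H.neighborSet x).ncard

/-- The number of negative edges of `G^π − H` incident to `x`. -/
noncomputable def negDeg (G : SimpleGraph V) (H : SimpleGraph W) (π : V ≃ W) (x : W) : ℕ :=
  (H.neighborSet x \ (G.map π.toEmbedding).neighborSet x).ncard

/-- The maximum mismatch count `MMC(π)`: the maximum degree of the mismatch graph `G^π − H`. -/
noncomputable def MMC [Fintype W] (G : SimpleGraph V) (H : SimpleGraph W) (π : V ≃ W) : ℕ :=
  Finset.univ.sup (mismatchDeg G H π)

/-- The edit mismatch norm `μ_edit(G^π, H)`: the number of edges of the mismatch graph. -/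
noncomputable def muEdit (G : SimpleGraph V) (H : SimpleGraph W) (π : V ≃ W) : ℕ :=
  (mismatchGraph G H π).edgeSet.ncard

/-- The edit distance `δ_edit(G, H)`: the minimum of `μ_edit(G^π, H)` over all bijections. -/
noncomputable def deltaEdit (G : SimpleGraph V) (H : SimpleGraph W) : ℕ :=
  ⨅ π : V ≃ W, muEdit G H π

open Classical in
/-- The signed adjacency matrix of the mismatch graph `G^π − H`:
`+1` on positive edges, `−1` on negative edges, `0` otherwise. -/
noncomputable def signedAdj (G : SimpleGraph V) (H : SimpleGraph W) (π : V ≃ W) :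
    Matrix W W ℝ := fun x y =>
  if (G.map π.toEmbedding).Adj x y ∧ ¬ H.Adj x y then 1
  else if H.Adj x y ∧ ¬ (G.map π.toEmbedding).Adj x y then -1 else 0

/-- The `ℓ_p` norm of a vector over a finite index type. -/
noncomputable def lpNorm [Fintype W] (p : ℝ) (x : W → ℝ) : ℝ :=
  (∑ i, |x i| ^ p) ^ p⁻¹

/-- The `ℓ_p`-operator norm of a matrix: `sup_{x ≠ 0} ‖Mx‖_p / ‖x‖_p`. -/
noncomputable def lpOpNorm [Fintype W] (p : ℝ) (M : Matrix W W ℝ) : ℝ :=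
  ⨆ x : {x : W → ℝ // x ≠ 0}, lpNorm p (M.mulVec x.1) / lpNorm p x.1

end MismatchDefs

/-- The graph `H_k` on vertex set `{0, 1, …, 2k−1}`: the Hamiltonian cycle
`0 − 1 − ⋯ − (2k−1) − 0` together with, for even `k`, the chords `{i, i+2}` for
`i ≡ 0, 1 (mod 4)`, and for odd `k`, the chords `{i, i−2}` for `i ≡ 2 (mod 4)`,
`{i, i+2}` for `i ≡ 3 (mod 4)`, and `{2k−2, 1}`. -/
def Hk (k : ℕ) : SimpleGraph (Fin (2 * k)) :=
  SimpleGraph.fromRel (fun a b =>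
    (b.val = a.val + 1) ∨ (a.val = 2 * k - 1 ∧ b.val = 0) ∨
    (if k % 2 = 0 then
      (a.val % 4 = 0 ∨ a.val % 4 = 1) ∧ b.val = a.val + 2
    else
      (a.val % 4 = 2 ∧ b.val = a.val - 2) ∨ (a.val % 4 = 3 ∧ b.val = a.val + 2) ∨
        (a.val = 2 * k - 2 ∧ b.val = 1)))

/-- Attach `5` new pendant leaves to every vertex satisfying `P` and `12` new pendant
leaves to every other vertex. The leaves of `v` are `Sum.inr ⟨v, i⟩`. -/
def hatGraph {V : Type*} (G : SimpleGraph V) (P : V → Prop) [DecidablePred P] :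
    SimpleGraph (V ⊕ Σ v : V, Fin (if P v then 5 else 12)) :=
  SimpleGraph.fromRel (fun a b =>
    match a, b with
    | Sum.inl u, Sum.inl v => G.Adj u v
    | Sum.inl u, Sum.inr x => u = x.1
    | _, _ => False)

/-- `σ ∈ Res(G_k, H_k)`: the bijection `σ` maps the independent set `A` onto the even
vertices `Even(2k)` (and hence its complement `B` onto the odd vertices `Odd(2k)`). -/
def InRes {V : Type*} (k : ℕ) (A : Finset V) (σ : V ≃ Fin (2 * k)) : Prop :=
  ∀ v, v ∈ A ↔ (σ v).val % 2 = 0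

section Mismatch

variable {V W : Type*} (G : SimpleGraph V) (H : SimpleGraph W) (π : V ≃ W)

theorem mismatchGraph_adj {x y : W} :
    (mismatchGraph G H π).Adj x y ↔
      (G.map π.toEmbedding).Adj x y ∧ ¬ H.Adj x y ∨ H.Adj x y ∧ ¬ (G.map π.toEmbedding).Adj x y :=
  Iff.rfl

theorem neighborSet_mismatchGraph (x : W) :
    (mismatchGraph G H π).neighborSet x =
      ((G.map π.toEmbedding).neighborSet x \ H.neighborSet x) ∪
        (H.neighborSet x \ (G.map π.toEmbedding).neighborSet x) :=
  rfl

variable [Finite W]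

theorem mismatchDeg_eq_posDeg_add_negDeg (x : W) :
    mismatchDeg G H π x = posDeg G H π x + negDeg G H π x := by
  rw [mismatchDeg, neighborSet_mismatchGraph, Set.ncard_union_eq disjoint_sdiff_sdiff, posDeg,
    negDeg]

theorem mismatchDeg_eq_two_mul_negDeg {x : W}
    (h : ((G.map π.toEmbedding).neighborSet x).ncard = (H.neighborSet x).ncard) :
    mismatchDeg G H π x = 2 * negDeg G H π x := by
  rw [mismatchDeg_eq_posDeg_add_negDeg, posDeg, negDeg,
    (Set.ncard_eq_ncard_iff_ncard_sdiff_eq_ncard_sdiff).mp h, two_mul]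

theorem negDeg_le_ncard_neighborSet (x : W) : negDeg G H π x ≤ (H.neighborSet x).ncard :=
  Set.ncard_le_ncard Set.sdiff_subset

end Mismatch

theorem SimpleGraph.IsRegularOfDegree.ncard_neighborSet_map {V W : Type*} {G : SimpleGraph V}
    [G.LocallyFinite] {d : ℕ} (hG : G.IsRegularOfDegree d) (π : V ≃ W) (x : W) :
    ((G.map π.toEmbedding).neighborSet x).ncard = d := by
  rw [← π.apply_symm_apply x, ← Equiv.coe_toEmbedding, neighborSet_map,
    Set.ncard_image_of_injective _ π.toEmbedding.injective, ← Nat.card_coe_set_eq,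
    Nat.card_eq_fintype_card, card_neighborSet_eq_degree, hG]

theorem InRes.mod_two_ne_of_map_adj {V : Type*} {G : SimpleGraph V} {k : ℕ} {A B : Finset V}
    {σ : V ≃ Fin (2 * k)} (hσ : InRes k A σ) (hUnion : ∀ v, v ∈ A ∨ v ∈ B)
    (hAind : ∀ u ∈ A, ∀ v ∈ A, ¬ G.Adj u v) (hBind : ∀ u ∈ B, ∀ v ∈ B, ¬ G.Adj u v)
    {a b : Fin (2 * k)} (h : (G.map σ.toEmbedding).Adj a b) : b.val % 2 ≠ a.val % 2 := by
  obtain ⟨u, v, huv, rfl, rfl⟩ := (map_adj _ _ _ _).mp h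
  have hsides : ¬ (u ∈ A ↔ v ∈ A) := fun hiff => by
    by_cases hu : u ∈ A
    · exact hAind u hu v (hiff.mp hu) huv
    · exact hBind u ((hUnion u).resolve_left hu) v
        ((hUnion v).resolve_left (hu ∘ hiff.mpr)) huv
  rw [hσ u, hσ v] at hsides
  simp only [Equiv.coe_toEmbedding]
  omega

namespace Hk

def next (k x : ℕ) : ℕ := if x = 2 * k - 1 then 0 else x + 1

def prev (k x : ℕ) : ℕ := if x = 0 then 2 * k - 1 else x - 1

/-- The chord partner of `x` in `Hk k` for odd `k`: the chords `{i, i - 2}` (`i ≡ 2 mod 4`) and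
`{i, i + 2}` (`i ≡ 3 mod 4`) pair every vertex except `1` and `2k - 2 ≡ 0 mod 4`, which the closing
chord pairs with each other. -/
def chord (k x : ℕ) : ℕ :=
  if x = 1 then 2 * k - 2
  else if x = 2 * k - 2 then 1
  else if x % 4 = 0 ∨ x % 4 = 3 then x + 2
  else x - 2

variable {k : ℕ} {x y : Fin (2 * k)}

theorem adj_of_val_eq_succ (h : y.val = x.val + 1) : (Hk k).Adj x y := by
  rw [Hk, fromRel_adj]
  exact ⟨by omega, Or.inl (Or.inl h)⟩

theorem adj_last_zero (hx : x.val = 2 * k - 1) (hy : y.val = 0) : (Hk k).Adj x y := by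
  rw [Hk, fromRel_adj]
  exact ⟨by omega, Or.inl (Or.inr (Or.inl ⟨hx, hy⟩))⟩

theorem chord_mod_two {k a : ℕ} (ha1 : a ≠ 1) (ha2 : a ≠ 2 * k - 2) : chord k a % 2 = a % 2 := by
  simp only [chord]
  split_ifs <;> omega

theorem adj_of_mod_four_eq_two (hodd : Odd k) (hx : x.val % 4 = 2) (hy : y.val = x.val - 2) :
    (Hk k).Adj x y := by
  rw [Nat.odd_iff] at hodd
  rw [Hk, fromRel_adj, if_neg (by omega)]
  exact ⟨by omega, Or.inl (Or.inr (Or.inr (Or.inl ⟨hx, hy⟩)))⟩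

theorem adj_of_mod_four_eq_three (hodd : Odd k) (hx : x.val % 4 = 3) (hy : y.val = x.val + 2) :
    (Hk k).Adj x y := by
  rw [Nat.odd_iff] at hodd
  rw [Hk, fromRel_adj, if_neg (by omega)]
  exact ⟨by omega, Or.inl (Or.inr (Or.inr (Or.inr (Or.inl ⟨hx, hy⟩))))⟩

theorem adj_closing_chord (hodd : Odd k) (hx : x.val = 2 * k - 2) (hy : y.val = 1) :
    (Hk k).Adj x y := by
  rw [Nat.odd_iff] at hodd
  rw [Hk, fromRel_adj, if_neg (by omega)]
  exact ⟨by omega, Or.inl (Or.inr (Or.inr (Or.inr (Or.inr ⟨hx, hy⟩))))⟩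

theorem adj_iff (hodd : Odd k) (hk : 3 ≤ k) :
    (Hk k).Adj x y ↔ y.val = next k x ∨ y.val = prev k x ∨ y.val = chord k x := by
  constructor
  · obtain ⟨m, rfl⟩ := hodd
    obtain ⟨a, ha⟩ := x
    obtain ⟨b, hb⟩ := y
    have hodd' : ¬ (2 * m + 1) % 2 = 0 := by omega
    simp only [Hk, fromRel_adj, hodd', if_false, next, prev, chord, ne_eq, Fin.mk.injEq]
    rintro ⟨hne, h | h⟩ <;> split_ifs <;> omega
  · rintro (h | h | h)
    · unfold next at h
      split_ifs at h with hx
      · exact adj_last_zero hx h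
      · exact adj_of_val_eq_succ h
    · unfold prev at h
      split_ifs at h with hx
      · exact (adj_last_zero h hx).symm
      · exact (adj_of_val_eq_succ (by omega)).symm
    · unfold chord at h
      split_ifs at h with h1 h2 h3
      · exact (adj_closing_chord hodd h h1).symm
      · exact adj_closing_chord hodd h2 h
      · rcases h3 with h3 | h3
        · exact (adj_of_mod_four_eq_two hodd (by omega) (by omega)).symm
        · exact adj_of_mod_four_eq_three hodd h3 h
      · rcases (show x.val % 4 = 1 ∨ x.val % 4 = 2 by omega) with h4 | h4
        · exact (adj_of_mod_four_eq_three hodd (by omega) (by omega)).symm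
        · exact adj_of_mod_four_eq_two hodd h4 h

theorem ncard_neighborSet (hodd : Odd k) (hk : 3 ≤ k) (x : Fin (2 * k)) :
    ((Hk k).neighborSet x).ncard = 3 := by
  obtain ⟨a, ha⟩ := x
  have hbounds : next k a < 2 * k ∧ prev k a < 2 * k ∧ chord k a < 2 * k ∧
      next k a ≠ prev k a ∧ next k a ≠ chord k a ∧ prev k a ≠ chord k a := by
    obtain ⟨m, rfl⟩ := hodd
    simp only [next, prev, chord]
    split_ifs <;> omega
  obtain ⟨hn, hp, hc, hnp, hnc, hpc⟩ := hbounds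
  refine Set.ncard_eq_three.mpr ⟨⟨_, hn⟩, ⟨_, hp⟩, ⟨_, hc⟩, ?_, ?_, ?_, ?_⟩
  · simpa [Fin.ext_iff] using hnp
  · simpa [Fin.ext_iff] using hnc
  · simpa [Fin.ext_iff] using hpc
  · ext y
    simp [adj_iff hodd hk, Fin.ext_iff]

theorem eq_chord_of_adj_of_mod_two_eq (hodd : Odd k) (hk : 3 ≤ k) (h : (Hk k).Adj x y)
    (hxy : y.val % 2 = x.val % 2) : x.val ≠ 1 ∧ x.val ≠ 2 * k - 2 ∧ y.val = chord k x := by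
  rcases (adj_iff hodd hk).mp h with h | h | h
  · simp only [next] at h
    split_ifs at h <;> omega
  · simp only [prev] at h
    split_ifs at h <;> omega
  · have hc := h
    simp only [chord] at hc
    refine ⟨?_, ?_, h⟩ <;> split_ifs at hc <;> omega

theorem exists_adj_mod_two_eq (hodd : Odd k) (hk : 3 ≤ k) (hx1 : x.val ≠ 1)
    (hx2 : x.val ≠ 2 * k - 2) :
    ∃ c : Fin (2 * k), (Hk k).Adj x c ∧ c.val % 2 = x.val % 2 := by
  have hc : chord k x < 2 * k := by
    have := x.isLt
    have := Nat.odd_iff.mp hodd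
    simp only [chord]
    split_ifs <;> omega
  exact ⟨⟨_, hc⟩, (adj_iff hodd hk).mpr (Or.inr (Or.inr rfl)), chord_mod_two hx1 hx2⟩

end Hk

theorem statement_11_general {V : Type*} [Fintype V] (k : ℕ) (hk : 2 ≤ k)
    (hkOdd : Odd k)
    (G : SimpleGraph V) [DecidableRel G.Adj] (A B : Finset V)
    (hUnion : ∀ v, v ∈ A ∨ v ∈ B)
    (hreg : G.IsRegularOfDegree 3)
    (hAind : ∀ u ∈ A, ∀ v ∈ A, ¬ G.Adj u v) (hBind : ∀ u ∈ B, ∀ v ∈ B, ¬ G.Adj u v)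
    (σ : V ≃ Fin (2 * k)) (hσ : InRes k A σ) :
    ∀ x : Fin (2 * k),
      (x.val ≠ 1 → x.val ≠ 2 * k - 2 →
        (∃! y : Fin (2 * k), (mismatchGraph G (Hk k) σ).Adj x y ∧ y.val % 2 = x.val % 2) ∧
        (∀ y : Fin (2 * k), (mismatchGraph G (Hk k) σ).Adj x y → y.val % 2 = x.val % 2 →
          (Hk k).Adj x y ∧ ¬ (G.map σ.toEmbedding).Adj x y) ∧
        (mismatchDeg G (Hk k) σ x = 2 ∨ mismatchDeg G (Hk k) σ x = 4 ∨
          mismatchDeg G (Hk k) σ x = 6)) ∧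
      (x.val = 1 ∨ x.val = 2 * k - 2 →
        (mismatchDeg G (Hk k) σ x = 0 ∨ mismatchDeg G (Hk k) σ x = 2 ∨
          mismatchDeg G (Hk k) σ x = 4 ∨ mismatchDeg G (Hk k) σ x = 6) ∧
        (∀ y : Fin (2 * k), (mismatchGraph G (Hk k) σ).Adj x y → y.val % 2 ≠ x.val % 2)) := by
  have hk3 : 3 ≤ k := by obtain ⟨m, rfl⟩ := hkOdd; omega
  have hcross {a b : Fin (2 * k)} (h : (G.map σ.toEmbedding).Adj a b) :
      b.val % 2 ≠ a.val % 2 :=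
    hσ.mod_two_ne_of_map_adj hUnion hAind hBind h
  have hneg {x y : Fin (2 * k)} (h : (mismatchGraph G (Hk k) σ).Adj x y)
      (hxy : y.val % 2 = x.val % 2) : (Hk k).Adj x y ∧ ¬ (G.map σ.toEmbedding).Adj x y :=
    ((mismatchGraph_adj _ _ _).mp h).resolve_left fun hG => hcross hG.1 hxy
  intro x
  have hdeg : mismatchDeg G (Hk k) σ x = 2 * negDeg G (Hk k) σ x :=
    mismatchDeg_eq_two_mul_negDeg _ _ _ <| by
      rw [hreg.ncard_neighborSet_map, Hk.ncard_neighborSet hkOdd hk3]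
  have hle : negDeg G (Hk k) σ x ≤ 3 :=
    Hk.ncard_neighborSet hkOdd hk3 x ▸ negDeg_le_ncard_neighborSet _ _ _ x
  refine ⟨fun hx1 hx2 => ?_, fun hx => ⟨by omega, fun y hy hxy => ?_⟩⟩
  · obtain ⟨c, hc, hcx⟩ := Hk.exists_adj_mod_two_eq hkOdd hk3 hx1 hx2
    have hcG : ¬ (G.map σ.toEmbedding).Adj x c := fun h => hcross h hcx
    have hpos : 0 < negDeg G (Hk k) σ x := (Set.ncard_pos).mpr ⟨c, hc, hcG⟩
    refine ⟨⟨c, ⟨(mismatchGraph_adj _ _ _).mpr (Or.inr ⟨hc, hcG⟩), hcx⟩, ?_⟩,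
      fun y hy hyx => hneg hy hyx, by omega⟩
    rintro y ⟨hy, hyx⟩
    exact Fin.ext <| (Hk.eq_chord_of_adj_of_mod_two_eq hkOdd hk3 (hneg hy hyx).1 hyx).2.2.trans
      (Hk.eq_chord_of_adj_of_mod_two_eq hkOdd hk3 hc hcx).2.2.symm
  · obtain ⟨hx1, hx2, -⟩ := Hk.eq_chord_of_adj_of_mod_two_eq hkOdd hk3 (hneg hy hxy).1 hxy
    omega

/-- Let `k ≥ 2` be odd, `G` a 3-regular bipartite graph on `2k` vertices
with bipartition into independent sets `A, B` of size `k`, and `σ ∈ Res(G, H_k)`. In the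
mismatch graph `G^σ − H_k`: (1) every vertex `x ∉ {1, 2k−2}` is adjacent to exactly one
other vertex of the same parity, any such same-parity edge is negative, and `x` has degree
`2`, `4` or `6`; (2) every vertex `x ∈ {1, 2k−2}` has degree `0`, `2`, `4` or `6` and all
its neighbours have parity opposite to that of `x`. -/
theorem statement_11 {V : Type*} [Fintype V] [DecidableEq V] (k : ℕ) (hk : 2 ≤ k)
    (hkOdd : Odd k)
    (G : SimpleGraph V) [DecidableRel G.Adj] (A B : Finset V)
    (hcard : Fintype.card V = 2 * k) (hA : A.card = k) (hB : B.card = k)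
    (hUnion : ∀ v, v ∈ A ∨ v ∈ B) (hDisj : Disjoint A B)
    (hreg : G.IsRegularOfDegree 3)
    (hAind : ∀ u ∈ A, ∀ v ∈ A, ¬ G.Adj u v) (hBind : ∀ u ∈ B, ∀ v ∈ B, ¬ G.Adj u v)
    (σ : V ≃ Fin (2 * k)) (hσ : InRes k A σ) :
    ∀ x : Fin (2 * k),
      (x.val ≠ 1 → x.val ≠ 2 * k - 2 →
        (∃! y : Fin (2 * k), (mismatchGraph G (Hk k) σ).Adj x y ∧ y.val % 2 = x.val % 2) ∧
        (∀ y : Fin (2 * k), (mismatchGraph G (Hk k) σ).Adj x y → y.val % 2 = x.val % 2 →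
          (Hk k).Adj x y ∧ ¬ (G.map σ.toEmbedding).Adj x y) ∧
        (mismatchDeg G (Hk k) σ x = 2 ∨ mismatchDeg G (Hk k) σ x = 4 ∨
          mismatchDeg G (Hk k) σ x = 6)) ∧
      (x.val = 1 ∨ x.val = 2 * k - 2 →
        (mismatchDeg G (Hk k) σ x = 0 ∨ mismatchDeg G (Hk k) σ x = 2 ∨
          mismatchDeg G (Hk k) σ x = 4 ∨ mismatchDeg G (Hk k) σ x = 6) ∧
        (∀ y : Fin (2 * k), (mismatchGraph G (Hk k) σ).Adj x y → y.val % 2 ≠ x.val % 2)) :=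
  statement_11_general k hk hkOdd G A B hUnion hreg hAind hBind σ hσ
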